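/- arXiv:math/0610820 — 4 statements merged into one kernel-verified Lean document; each statement's English description precedes it below -/
import Mathlib

section
/- Let π : X → Θ be an r-fold covering of the solenoid Θ. Then the restriction of π over Γ₀ is a trivial covering: there is a homeomorphism h : π⁻¹(Γ₀) → Γ₀ × {1, 2, …, r} such that π restricted to π⁻¹(Γ₀) equals the first projection composed with h. -/
open Topology

/-- The solenoid of type `(w 0, w 1, …)` (denoted `(w₁, w₂, …)` in the paper),
as a subgroup of the product of countably many circles:
`{(x₀, x₁, …) : xₙ₋₁ = xₙ ^ wₙ for all n ≥ 1}`. -/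
noncomputable def solenoidSubgroup (w : ℕ → ℕ) : Subgroup (ℕ → Circle) where
  carrier := {x | ∀ n, x n = x (n + 1) ^ w n}
  one_mem' := by intro n; simp
  mul_mem' := by intro a b ha hb n; simp only [Pi.mul_apply, ha n, hb n, mul_pow]
  inv_mem' := by intro a ha n; simp only [Pi.inv_apply, ha n, inv_pow]

/-- The solenoid as a topological space, with the subspace topology from the
product topology. -/
noncomputable abbrev Solenoid (w : ℕ → ℕ) : Type :=
  ↥(solenoidSubgroup w)

/-- `Γₙ`, the kernel of the projection of the solenoid onto its `n`-th
coordinate: `{x ∈ Θ | x₀ = x₁ = ⋯ = xₙ = 1}`, as a subgroup of the solenoid. -/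
noncomputable def gammaSubgroup (w : ℕ → ℕ) (n : ℕ) : Subgroup (Solenoid w) where
  carrier := {x | ∀ k ≤ n, (x : ℕ → Circle) k = 1}
  one_mem' := by intro k _; simp
  mul_mem' := by
    intro a b ha hb k hk
    simp only [Subgroup.coe_mul, Pi.mul_apply, ha k hk, hb k hk, one_mul]
  inv_mem' := by
    intro a ha k hk
    simp only [Subgroup.coe_inv, Pi.inv_apply, ha k hk, inv_one]

lemma isClosed_solenoid (w : ℕ → ℕ) :
    IsClosed ((solenoidSubgroup w : Set (ℕ → Circle))) := by
  have h : ((solenoidSubgroup w : Set (ℕ → Circle))) =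
      ⋂ n, {x : ℕ → Circle | x n = x (n + 1) ^ w n} := by
    ext x
    simp only [Set.mem_iInter, Set.mem_setOf_eq, SetLike.mem_coe]
    exact Iff.rfl
  rw [h]
  exact isClosed_iInter fun n =>
    isClosed_eq (continuous_apply n) ((continuous_apply (n + 1)).pow _)

instance solenoidCompact (w : ℕ → ℕ) : CompactSpace (Solenoid w) :=
  isCompact_iff_compactSpace.mp (isClosed_solenoid w).isCompact

lemma isClosed_gamma (w : ℕ → ℕ) (n : ℕ) :
    IsClosed ((gammaSubgroup w n : Set (Solenoid w))) := by
  have h : ((gammaSubgroup w n : Set (Solenoid w)))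
      = ⋂ k, ⋂ (_ : k ≤ n), {x : Solenoid w | (x : ℕ → Circle) k = 1} := by
    ext x
    simp only [Set.mem_iInter, Set.mem_setOf_eq, SetLike.mem_coe]
    exact Iff.rfl
  rw [h]
  exact isClosed_iInter fun k => isClosed_iInter fun _ =>
    isClosed_eq ((continuous_apply k).comp continuous_subtype_val) continuous_const

instance gammaCompact (w : ℕ → ℕ) (n : ℕ) : CompactSpace ↥(gammaSubgroup w n) :=
  isCompact_iff_compactSpace.mp (isClosed_gamma w n).isCompact

lemma gamma_coord_pow (w : ℕ → ℕ) (x : ↥(gammaSubgroup w 0)) (n : ℕ) :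
    ((x : Solenoid w) : ℕ → Circle) n ^ (∏ k ∈ Finset.range n, w k) = 1 := by
  induction n with
  | zero => simpa using x.2 0 le_rfl
  | succ n ih =>
      rw [Finset.prod_range_succ, mul_comm, pow_mul, ← (x : Solenoid w).2 n]
      exact ih

lemma circle_coe_pow (z : Circle) (n : ℕ) : ((z ^ n : Circle) : ℂ) = (z : ℂ) ^ n := by
  induction n with
  | zero => simp
  | succ n ih => rw [pow_succ, pow_succ, Circle.coe_mul, ih]

lemma circle_roots_finite (m : ℕ) (hm : 0 < m) : {z : Circle | z ^ m = 1}.Finite := by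
  have h : {z : Circle | z ^ m = 1} ⊆
      ((↑) : Circle → ℂ) ⁻¹' ↑(Polynomial.nthRootsFinset m (1 : ℂ)) := by
    intro z hz
    show (z : ℂ) ∈ Polynomial.nthRootsFinset m (1 : ℂ)
    rw [Polynomial.mem_nthRootsFinset hm]
    have h2 : ((z ^ m : Circle) : ℂ) = ((1 : Circle) : ℂ) := by rw [hz]
    rwa [circle_coe_pow, Circle.coe_one] at h2
  exact Set.Finite.subset
    (Set.Finite.preimage (Set.injOn_of_injective Circle.coe_injective)
      (Finset.finite_toSet _)) h

lemma gamma_exists_clopen (w : ℕ → ℕ) (hw : ∀ n, 0 < w n)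
    {a b : ↥(gammaSubgroup w 0)} (hab : a ≠ b) :
    ∃ U : Set ↥(gammaSubgroup w 0), IsClopen U ∧ a ∈ U ∧ b ∉ U := by
  have h : ∃ n, ((a : Solenoid w) : ℕ → Circle) n ≠ ((b : Solenoid w) : ℕ → Circle) n := by
    by_contra h
    push_neg at h
    exact hab (Subtype.ext (Subtype.ext (funext h)))
  obtain ⟨n, hn⟩ := h
  set m := ∏ k ∈ Finset.range n, w k with hm
  have hmpos : 0 < m := Finset.prod_pos fun k _ => hw k
  set S : Set Circle := {z | z ^ m = 1} with hS
  have hSfin : S.Finite := circle_roots_finite m hmpos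
  set an : Circle := ((a : Solenoid w) : ℕ → Circle) n with han
  set q : ↥(gammaSubgroup w 0) → Circle := fun g => ((g : Solenoid w) : ℕ → Circle) n with hq
  have hqcont : Continuous q :=
    (continuous_apply n).comp (continuous_subtype_val.comp continuous_subtype_val)
  have hqS : ∀ g, q g ∈ S := fun g => gamma_coord_pow w g n
  have hcompl : (q ⁻¹' (S \ {an})ᶜ)ᶜ = q ⁻¹' {an}ᶜ := by
    ext g
    simp only [Set.mem_compl_iff, Set.mem_preimage, Set.mem_diff, Set.mem_singleton_iff, not_not]
    exact ⟨fun h => h.2, fun h => ⟨hqS g, h⟩⟩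
  refine ⟨q ⁻¹' (S \ {an})ᶜ, ⟨?_, ?_⟩, ?_, ?_⟩
  · rw [← isOpen_compl_iff, hcompl]
    exact (isOpen_compl_singleton).preimage hqcont
  · exact (hSfin.diff.isClosed.isOpen_compl).preimage hqcont
  · intro hmem
    exact hmem.2 rfl
  · intro hmem
    exact hmem ⟨hqS b, hn.symm⟩

lemma gamma_totallySeparated (w : ℕ → ℕ) (hw : ∀ n, 0 < w n) :
    TotallySeparatedSpace ↥(gammaSubgroup w 0) := by
  constructor
  intro x _ y _ hxy
  obtain ⟨U, hU, hx, hy⟩ := gamma_exists_clopen w hw hxy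
  exact ⟨U, Uᶜ, hU.2, hU.1.isOpen_compl, hx, hy, by simp, disjoint_compl_right⟩

/-- **Claim 2:** For an `r`-fold covering `π : X → Θ` of the solenoid, the
restriction of `π` over `Γ₀` is a trivial covering: `π⁻¹(Γ₀) ≅ Γ₀ × {1,…,r}`
as covering spaces of `Γ₀`. -/
theorem covering_trivial_over_gamma_zero
    (w : ℕ → ℕ) (hw : ∀ n, 1 < w n)
    (X : Type*) [TopologicalSpace X] (π : X → Solenoid w)
    (hπ : IsCoveringMap π) (r : ℕ) (hr : 0 < r)
    (hfib : ∀ y : Solenoid w, Nat.card (π ⁻¹' {y}) = r) :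
    ∃ h : {x : X // π x ∈ gammaSubgroup w 0} ≃ₜ ↥(gammaSubgroup w 0) × Fin r,
      ∀ x : {x : X // π x ∈ gammaSubgroup w 0},
        ((h x).1 : Solenoid w) = π (x : X) := by
  classical
  haveI : TotallySeparatedSpace ↥(gammaSubgroup w 0) :=
    gamma_totallySeparated w (fun n => lt_trans Nat.zero_lt_one (hw n))
  set G := ↥(gammaSubgroup w 0) with hG
  set E := {x : X // π x ∈ gammaSubgroup w 0} with hE
  let p : E → G := fun e => ⟨π e.1, e.2⟩
  have hpcont : Continuous p :=
    Continuous.subtype_mk (hπ.continuous.comp continuous_subtype_val) _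
  let T : ∀ g : G, Bundle.Trivialization ↥(π ⁻¹' {(g : Solenoid w)}) π :=
    fun g => haveI : Nonempty ↥(π ⁻¹' {(g : Solenoid w)}) :=
      (Nat.card_pos_iff.mp (by rw [hfib]; exact hr)).1
    (hπ (g : Solenoid w)).toTrivialization
  have hT : ∀ g : G, (g : Solenoid w) ∈ (T g).baseSet :=
    fun g => haveI : Nonempty ↥(π ⁻¹' {(g : Solenoid w)}) :=
      (Nat.card_pos_iff.mp (by rw [hfib]; exact hr)).1
    (hπ (g : Solenoid w)).mem_toTrivialization_baseSet
  have hdisc : ∀ g : G, DiscreteTopology ↥(π ⁻¹' {(g : Solenoid w)}) :=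
    fun g => (hπ (g : Solenoid w)).1
  have hfin : ∀ g : G, Finite ↥(π ⁻¹' {(g : Solenoid w)}) := fun g =>
    Nat.finite_of_card_ne_zero (by rw [hfib]; omega)
  let ε : ∀ g : G, ↥(π ⁻¹' {(g : Solenoid w)}) ≃ Fin r := fun g =>
    haveI := hfin g
    letI := Fintype.ofFinite ↥(π ⁻¹' {(g : Solenoid w)})
    Fintype.equivFinOfCardEq (by rw [← Nat.card_eq_fintype_card, hfib])
  have hVopen : ∀ g : G, IsOpen {h : G | (h : Solenoid w) ∈ (T g).baseSet} := fun g =>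
    (T g).open_baseSet.preimage continuous_subtype_val
  choose W hWclopen hWmem hWsub using fun g : G =>
    compact_exists_isClopen_in_isOpen (hVopen g) (hT g)
  obtain ⟨s, hs⟩ := isCompact_univ.elim_finite_subcover W (fun g => (hWclopen g).2)
    (fun g _ => Set.mem_iUnion.mpr ⟨g, hWmem g⟩)
  set k := s.card with hk
  let enum : {g // g ∈ s} ≃ Fin k := Fintype.equivFinOfCardEq (Fintype.card_coe s)
  let gi : Fin k → G := fun i => ↑(enum.symm i)
  have hcov : ∀ g : G, ∃ i : Fin k, g ∈ W (gi i) := by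
    intro g
    obtain ⟨g', hg's, hgW⟩ := Set.mem_iUnion₂.mp (hs (Set.mem_univ g))
    refine ⟨enum ⟨g', hg's⟩, ?_⟩
    simpa only [gi, Equiv.symm_apply_apply] using hgW
  let D : Fin k → Set G := fun i => W (gi i) \ ⋃ j ∈ Set.Iio i, W (gi j)
  have hDclopen : ∀ i, IsClopen (D i) := fun i =>
    ⟨(hWclopen _).1.sdiff (isOpen_biUnion fun j _ => (hWclopen _).2),
     (hWclopen _).2.sdiff (Set.Finite.isClosed_biUnion (Set.toFinite _)
       fun j _ => (hWclopen _).1)⟩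
  have hDex : ∀ g : G, ∃ i, g ∈ D i := by
    intro g
    obtain ⟨i₀, hi₀⟩ := hcov g
    obtain ⟨i, hi, hmin⟩ := (Finset.univ.filter (fun i : Fin k => g ∈ W (gi i))).exists_min_image
      id ⟨i₀, by simp [hi₀]⟩
    rw [Finset.mem_filter] at hi
    refine ⟨i, hi.2, ?_⟩
    intro hg
    obtain ⟨j, hj, hgj⟩ := Set.mem_iUnion₂.mp hg
    have hle := hmin j (by simp [hgj])
    exact (not_lt.mpr hle) hj
  choose ind hind using hDex
  have hindeq : ∀ (g : G) (i : Fin k), g ∈ D i → ind g = i := by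
    intro g i hi
    by_contra hne
    rcases lt_or_gt_of_ne hne with h | h
    · exact hi.2 (Set.mem_biUnion (Set.mem_Iio.mpr h) (hind g).1)
    · exact (hind g).2 (Set.mem_biUnion (Set.mem_Iio.mpr h) hi.1)
  have hbase : ∀ g : G, (g : Solenoid w) ∈ (T (gi (ind g))).baseSet := fun g =>
    hWsub (gi (ind g)) (hind g).1
  let fE : E → G × Fin r := fun e =>
    (p e, ε (gi (ind (p e))) ((T (gi (ind (p e)))) e.1).2)
  have hmemE : ∀ bj : G × Fin r,
      π ((T (gi (ind bj.1))).toOpenPartialHomeomorph.symm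
        ((bj.1 : Solenoid w), (ε (gi (ind bj.1))).symm bj.2)) ∈ gammaSubgroup w 0 := by
    intro bj
    have h1 : π ((T (gi (ind bj.1))).toOpenPartialHomeomorph.symm
        ((bj.1 : Solenoid w), (ε (gi (ind bj.1))).symm bj.2)) = (bj.1 : Solenoid w) :=
      (T (gi (ind bj.1))).proj_symm_apply' (hbase bj.1)
    rw [h1]
    exact bj.1.2
  let gE : G × Fin r → E := fun bj =>
    ⟨(T (gi (ind bj.1))).toOpenPartialHomeomorph.symm
      ((bj.1 : Solenoid w), (ε (gi (ind bj.1))).symm bj.2), hmemE bj⟩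
  have hsource : ∀ e : E, e.1 ∈ (T (gi (ind (p e)))).source := fun e =>
    (T (gi (ind (p e)))).mem_source.mpr (hbase (p e))
  have hleft : ∀ e : E, gE (fE e) = e := by
    intro e
    apply Subtype.ext
    show (T (gi (ind (p e)))).toOpenPartialHomeomorph.symm
        ((p e : Solenoid w), (ε (gi (ind (p e)))).symm
          ((ε (gi (ind (p e)))) ((T (gi (ind (p e)))) e.1).2)) = e.1
    rw [Equiv.symm_apply_apply]
    have h2 : ((p e : Solenoid w), ((T (gi (ind (p e)))) e.1).2)
        = (T (gi (ind (p e)))) e.1 := (T (gi (ind (p e)))).mk_proj_snd (hsource e)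
    rw [h2]
    exact (T (gi (ind (p e)))).toOpenPartialHomeomorph.left_inv (hsource e)
  have hright : ∀ bj : G × Fin r, fE (gE bj) = bj := by
    rintro ⟨b, j⟩
    have hπx : π (gE (b, j)).1 = (b : Solenoid w) :=
      (T (gi (ind b))).proj_symm_apply' (hbase b)
    have hpb : p (gE (b, j)) = b := Subtype.ext hπx
    show (p (gE (b, j)), ε (gi (ind (p (gE (b, j)))))
        ((T (gi (ind (p (gE (b, j)))))) (gE (b, j)).1).2) = (b, j)
    rw [hpb]
    have happ : (T (gi (ind b))) (gE (b, j)).1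
        = ((b : Solenoid w), (ε (gi (ind b))).symm j) :=
      (T (gi (ind b))).toOpenPartialHomeomorph.right_inv
        ((T (gi (ind b))).mem_target.mpr (hbase b))
    rw [happ, Equiv.apply_symm_apply]
  have hcontf : Continuous fE := by
    rw [continuous_iff_continuousAt]
    intro e₀
    have hN : p ⁻¹' (D (ind (p e₀))) ∈ 𝓝 e₀ :=
      ((hDclopen (ind (p e₀))).2.preimage hpcont).mem_nhds (hind (p e₀))
    have heq : ∀ e ∈ p ⁻¹' (D (ind (p e₀))), fE e
        = (p e, ε (gi (ind (p e₀))) ((T (gi (ind (p e₀)))) e.1).2) := by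
      intro e he
      show (p e, ε (gi (ind (p e))) ((T (gi (ind (p e)))) e.1).2) = _
      rw [hindeq (p e) (ind (p e₀)) he]
    haveI := hdisc (gi (ind (p e₀)))
    have hTc : ContinuousAt (fun e : E => (T (gi (ind (p e₀)))) e.1) e₀ := by
      have h1 : ContinuousAt (T (gi (ind (p e₀)))) e₀.1 :=
        (T (gi (ind (p e₀)))).toOpenPartialHomeomorph.continuousAt (hsource e₀)
      exact h1.comp continuous_subtype_val.continuousAt
    have hcAt : ContinuousAt
        (fun e : E => (p e, ε (gi (ind (p e₀))) ((T (gi (ind (p e₀)))) e.1).2)) e₀ :=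
      ContinuousAt.prodMk hpcont.continuousAt
        ((continuous_of_discreteTopology.continuousAt).comp
          (continuous_snd.continuousAt.comp hTc))
    exact hcAt.congr ((Filter.eventuallyEq_of_mem hN heq).symm)
  have hcontg : Continuous gE := by
    apply Continuous.subtype_mk
      (f := fun bj : G × Fin r => (T (gi (ind bj.1))).toOpenPartialHomeomorph.symm
        ((bj.1 : Solenoid w), (ε (gi (ind bj.1))).symm bj.2))
    rw [continuous_iff_continuousAt]
    intro bj₀
    have hN : (Prod.fst ⁻¹' (D (ind bj₀.1)) : Set (G × Fin r)) ∈ 𝓝 bj₀ :=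
      ((hDclopen (ind bj₀.1)).2.preimage continuous_fst).mem_nhds (hind bj₀.1)
    have heq : ∀ bj ∈ (Prod.fst ⁻¹' (D (ind bj₀.1)) : Set (G × Fin r)),
        (T (gi (ind bj.1))).toOpenPartialHomeomorph.symm
          ((bj.1 : Solenoid w), (ε (gi (ind bj.1))).symm bj.2)
        = (T (gi (ind bj₀.1))).toOpenPartialHomeomorph.symm
          ((bj.1 : Solenoid w), (ε (gi (ind bj₀.1))).symm bj.2) := by
      intro bj hbj
      rw [hindeq bj.1 (ind bj₀.1) hbj]
    have hsymc : ContinuousAt ((T (gi (ind bj₀.1))).toOpenPartialHomeomorph.symm)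
        ((bj₀.1 : Solenoid w), (ε (gi (ind bj₀.1))).symm bj₀.2) := by
      apply (T (gi (ind bj₀.1))).toOpenPartialHomeomorph.symm.continuousAt
      rw [OpenPartialHomeomorph.symm_source]
      exact (T (gi (ind bj₀.1))).mem_target.mpr (hbase bj₀.1)
    haveI := hdisc (gi (ind bj₀.1))
    have hpair : ContinuousAt
        (fun bj : G × Fin r => ((bj.1 : Solenoid w), (ε (gi (ind bj₀.1))).symm bj.2)) bj₀ :=
      ((continuous_subtype_val.comp continuous_fst).prodMk
        (continuous_of_discreteTopology.comp continuous_snd)).continuousAt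
    have hcAt : ContinuousAt (fun bj : G × Fin r =>
        (T (gi (ind bj₀.1))).toOpenPartialHomeomorph.symm
          ((bj.1 : Solenoid w), (ε (gi (ind bj₀.1))).symm bj.2)) bj₀ :=
      ContinuousAt.comp hsymc hpair
    exact hcAt.congr ((Filter.eventuallyEq_of_mem hN heq).symm)
  exact ⟨{ toFun := fE, invFun := gE, left_inv := hleft, right_inv := hright,
           continuous_toFun := hcontf, continuous_invFun := hcontg },
    fun x => rfl⟩
end

section
/- Let r be a positive integer, let w₁, w₂, … be integers with each wₙ > 1, and let σ₀, σ₁, σ₂, … be permutations of {1, 2, …, r} satisfying σ_{n+1} = σₙ^{w_{n+1}} for all n ≥ 0. Then there exists N such that for every n ≥ N, the length of each orbit (i.e., the cardinality of each cycle) of σₙ is relatively prime to w_{n'} for all n' > n. -/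
/-!
Each term is a power `σ ^ w` of its predecessor `σ`, and `ord (σ ^ w) = ord σ / gcd(ord σ, w)`.
The orders therefore form a non-increasing sequence of positive integers, which is eventually
constant; once it is constant, every later exponent `w` must be coprime to it. Every orbit length
of a permutation divides its order.
-/

theorem IsOfFinOrder.orderOf_pow_eq_self_iff {G : Type*} [Monoid G] {x : G} (hx : IsOfFinOrder x)
    (n : ℕ) : orderOf (x ^ n) = orderOf x ↔ (orderOf x).Coprime n := by
  rw [hx.orderOf_pow, Nat.div_eq_self, Nat.Coprime]
  simp only [hx.orderOf_pos.ne', false_or]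

section PowerSequence

variable {G : Type*} [LeftCancelMonoid G] [Finite G] {σ : ℕ → G} {w : ℕ → ℕ}

theorem antitone_orderOf_of_pow_succ (hσ : ∀ n, σ (n + 1) = σ n ^ w n) :
    Antitone fun n ↦ orderOf (σ n) :=
  antitone_nat_of_succ_le fun n ↦ by
    rw [hσ n]
    exact Nat.le_of_dvd (orderOf_pos _) (orderOf_pow_dvd _)

theorem exists_coprime_orderOf_of_pow_succ (hσ : ∀ n, σ (n + 1) = σ n ^ w n) :
    ∃ N, ∀ n ≥ N, ∀ m ≥ n, (orderOf (σ n)).Coprime (w m) := by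
  obtain ⟨N, hN⟩ := WellFoundedLT.antitone_chain_condition (antitone_orderOf_of_pow_succ hσ)
  refine ⟨N, fun n hn m hm ↦ ?_⟩
  have hnm : orderOf (σ n) = orderOf (σ m) := (hN n hn).symm.trans (hN m (hn.trans hm))
  have hstable : orderOf (σ m ^ w m) = orderOf (σ m) := by
    rw [← hσ m, ← hN m (hn.trans hm), hN (m + 1) (by omega)]
  exact hnm ▸ ((isOfFinOrder_of_finite _).orderOf_pow_eq_self_iff _).mp hstable

end PowerSequence

/-- Here `w n` is the paper's `wₙ₊₁`, and the length of the orbit of `σₙ` through `j` is the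
minimal period of `σ n` at `j`. -/
theorem orbit_length_coprime_eventually_general
    (r : ℕ) (w : ℕ → ℕ)
    (σ : ℕ → Equiv.Perm (Fin r)) (hσ : ∀ n, σ (n + 1) = σ n ^ w n) :
    ∃ N : ℕ, ∀ n ≥ N, ∀ j : Fin r, ∀ m ≥ n,
      Nat.Coprime (Function.minimalPeriod (⇑(σ n)) j) (w m) := by
  obtain ⟨N, hN⟩ := exists_coprime_orderOf_of_pow_succ hσ
  exact ⟨N, fun n hn j m hm ↦ (hN n hn m hm).coprime_dvd_left (MulAction.period_dvd_orderOf _ j)⟩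

/-- **Claim 4:** Given permutations `σ₀, σ₁, …` of `{1, …, r}` with
`σₙ₊₁ = σₙ ^ wₙ₊₁` (here `w n` denotes `wₙ₊₁` and `σ n` denotes `σₙ`), for all
sufficiently large `n` the length of each orbit of `σₙ` (the cardinality of the
cycle through any point `j`, i.e. the minimal period of `σₙ` at `j`) is
relatively prime to `wₙ'` for all `n' > n`. -/
theorem orbit_length_coprime_eventually
    (r : ℕ) (hr : 0 < r) (w : ℕ → ℕ) (hw : ∀ n, 1 < w n)
    (σ : ℕ → Equiv.Perm (Fin r)) (hσ : ∀ n, σ (n + 1) = σ n ^ w n) :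
    ∃ N : ℕ, ∀ n ≥ N, ∀ j : Fin r, ∀ m ≥ n,
      Nat.Coprime (Function.minimalPeriod (⇑(σ n)) j) (w m) :=
  orbit_length_coprime_eventually_general r w σ hσ
end

section
/- Let Θ be the solenoid of type (w₁, w₂, …), let n ≥ 0, and let l be a positive integer relatively prime to w_{n'} for all n' > n. Then the translation ψₙ : Γₙ → Γₙ, ψₙ(x) = γ(w₁⋯wₙ)·x, is topologically conjugate to its l-th iterate ψₙ^l; indeed the l-th power automorphism θ : Γₙ → Γₙ, θ(x) = x^l, is a homeomorphism satisfying θ ∘ ψₙ = ψₙ^l ∘ θ. -/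
/-!
For `k ≥ n`, the coordinate `x k` of a point of `Γₙ` satisfies
`x k ^ (w n ⋯ w (k - 1)) = x n = 1`, and this exponent is coprime to `l`. On elements of order prime to `l`, `z ↦ z ^ l` is injective and
has a root of the same order; applying this coordinatewise, the roots automatically satisfy the
solenoid relations by uniqueness, so `θ(x) = x ^ l` is a continuous bijection of the compact
group `Γₙ`, hence a homeomorphism. Since `ψₙ` is a translation in an abelian group,
`θ (g x) = g ^ l θ x = ψₙ^l (θ x)`.
-/

open Topology

private lemma circle_exp_pow (b : ℝ) (m : ℕ) :
    Circle.exp b ^ m = Circle.exp (m * b) := by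
  induction m with
  | zero => simp
  | succ k ih =>
    rw [pow_succ, ih, ← Circle.exp_add, Nat.cast_succ]
    ring_nf

private lemma w_cast_ne_zero {w : ℕ → ℕ} (hw : ∀ n, 1 < w n) (j : ℕ) :
    (w j : ℝ) ≠ 0 := by
  exact_mod_cast (Nat.zero_lt_of_lt (hw j)).ne'

private lemma prod_w_ne_zero {w : ℕ → ℕ} (hw : ∀ n, 1 < w n) (k : ℕ) :
    (∏ j ∈ Finset.range k, (w j : ℝ)) ≠ 0 :=
  Finset.prod_ne_zero_iff.mpr fun j _ => w_cast_ne_zero hw j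

private lemma solenoidGamma_mem (w : ℕ → ℕ) (hw : ∀ n, 1 < w n) (t : ℝ) :
    (fun k => Circle.exp (2 * Real.pi * t / ∏ j ∈ Finset.range k, (w j : ℝ)))
      ∈ solenoidSubgroup w := by
  intro k
  show Circle.exp _ = Circle.exp _ ^ w k
  rw [circle_exp_pow]
  congr 1
  rw [Finset.prod_range_succ]
  have h1 := prod_w_ne_zero hw k
  have h2 := w_cast_ne_zero hw k
  field_simp

/-- The one-parameter subgroup `γ : ℝ → Θ`,
`γ(t) = (e^{2πit}, e^{2πit/w₁}, e^{2πit/(w₁w₂)}, …)`. -/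
noncomputable def solenoidGamma (w : ℕ → ℕ) (hw : ∀ n, 1 < w n) (t : ℝ) :
    Solenoid w :=
  ⟨fun k => Circle.exp (2 * Real.pi * t / ∏ j ∈ Finset.range k, (w j : ℝ)),
    solenoidGamma_mem w hw t⟩

private lemma solenoidGamma_mem_gamma (w : ℕ → ℕ) (hw : ∀ n, 1 < w n) (n : ℕ) :
    solenoidGamma w hw (∏ j ∈ Finset.range n, (w j : ℝ)) ∈ gammaSubgroup w n := by
  intro k hk
  show Circle.exp _ = 1
  have h1 := prod_w_ne_zero hw k
  have key : 2 * Real.pi * (∏ j ∈ Finset.range n, (w j : ℝ)) /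
      (∏ j ∈ Finset.range k, (w j : ℝ)) =
      ((∏ j ∈ Finset.Ico k n, w j : ℕ) : ℤ) * (2 * Real.pi) := by
    rw [← Finset.prod_range_mul_prod_Ico (fun j => ((w j : ℝ))) hk]
    push_cast
    field_simp
  rw [key]
  exact Circle.exp_int_mul_two_pi _

/-- The translation `ψₙ : Γₙ → Γₙ`, `ψₙ(x) = γ(w₁⋯wₙ) · x`. -/
noncomputable def solenoidPsi (w : ℕ → ℕ) (hw : ∀ n, 1 < w n) (n : ℕ) :
    ↥(gammaSubgroup w n) → ↥(gammaSubgroup w n) :=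
  fun x =>
    (⟨solenoidGamma w hw (∏ j ∈ Finset.range n, (w j : ℝ)),
      solenoidGamma_mem_gamma w hw n⟩ : ↥(gammaSubgroup w n)) * x

section CoprimePow

variable {M : Type*} {l m : ℕ}

theorem exists_pow_eq_and_pow_eq_one_of_coprime [Monoid M] (hlm : l.Coprime m) {z : M}
    (hz : z ^ m = 1) : ∃ x : M, x ^ l = z ∧ x ^ m = 1 := by
  obtain ⟨u, hu⟩ := exists_pow_eq_self_of_coprime
    (hlm.coprime_dvd_right (orderOf_dvd_of_pow_eq_one hz))
  refine ⟨z ^ u, ?_, ?_⟩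
  · rwa [← pow_mul, mul_comm, pow_mul]
  · rw [← pow_mul, mul_comm, pow_mul, hz, one_pow]

theorem eq_of_pow_eq_pow_of_coprime [CommGroup M] (hlm : l.Coprime m) {a b : M}
    (hab : a ^ l = b ^ l) (ha : a ^ m = 1) (hb : b ^ m = 1) : a = b := by
  rw [← div_eq_one, ← pow_eq_one_iff_of_coprime hlm, div_pow, div_pow, hab, ha, hb]
  exact ⟨div_self' _, div_self' _⟩

end CoprimePow

theorem pow_comp_mul_left {M : Type*} [CommMonoid M] (g : M) (l : ℕ) :
    (fun x : M => x ^ l) ∘ (g * ·) = (g * ·)^[l] ∘ (fun x : M => x ^ l) := by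
  funext x
  simp [mul_left_iterate, mul_pow]

section Solenoid

variable {w : ℕ → ℕ} {n : ℕ}

theorem isClosed_solenoidSubgroup (w : ℕ → ℕ) :
    IsClosed (solenoidSubgroup w : Set (ℕ → Circle)) := by
  show IsClosed {x : ℕ → Circle | ∀ k, x k = x (k + 1) ^ w k}
  simp only [Set.ofPred_forall]
  exact isClosed_iInter fun k =>
    isClosed_eq (continuous_apply k) ((continuous_apply (k + 1)).pow _)

theorem isClosed_gammaSubgroup (w : ℕ → ℕ) (n : ℕ) :
    IsClosed (gammaSubgroup w n : Set (Solenoid w)) := by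
  show IsClosed {x : Solenoid w | ∀ k ≤ n, (x : ℕ → Circle) k = 1}
  simp only [Set.ofPred_forall]
  exact isClosed_iInter fun k => isClosed_iInter fun _ =>
    isClosed_eq ((continuous_apply k).comp continuous_subtype_val) continuous_const

instance (w : ℕ → ℕ) : CompactSpace (Solenoid w) :=
  isCompact_iff_compactSpace.mp (isClosed_solenoidSubgroup w).isCompact

instance (w : ℕ → ℕ) (n : ℕ) : CompactSpace (gammaSubgroup w n) :=
  isCompact_iff_compactSpace.mp (isClosed_gammaSubgroup w n).isCompact

theorem Solenoid.apply_eq_pow_prod (x : Solenoid w) {a b : ℕ} (hab : a ≤ b) :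
    (x : ℕ → Circle) a = (x : ℕ → Circle) b ^ ∏ j ∈ Finset.Ico a b, w j := by
  induction b, hab using Nat.le_induction with
  | base => simp
  | succ b hab ih =>
    rw [ih, x.2 b, ← pow_mul, Finset.prod_Ico_succ_top hab, mul_comm]

theorem gammaSubgroup.apply_pow_prod_eq_one (x : gammaSubgroup w n) (k : ℕ) :
    ((x : Solenoid w) : ℕ → Circle) k ^ ∏ j ∈ Finset.Ico n k, w j = 1 := by
  rcases le_total n k with hnk | hkn
  · rw [← Solenoid.apply_eq_pow_prod _ hnk, x.2 n le_rfl]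
  · rw [Finset.Ico_eq_empty_of_le hkn, Finset.prod_empty, pow_one, x.2 k hkn]

end Solenoid

section PowMap

variable {w : ℕ → ℕ} {n l : ℕ}

theorem coprime_prod_Ico (hcop : ∀ m ≥ n, l.Coprime (w m)) (k : ℕ) :
    l.Coprime (∏ j ∈ Finset.Ico n k, w j) :=
  Nat.Coprime.prod_right fun j hj => hcop j (Finset.mem_Ico.mp hj).1

theorem gammaSubgroup.pow_injective (hcop : ∀ m ≥ n, l.Coprime (w m)) :
    Function.Injective (fun x : gammaSubgroup w n => x ^ l) := by
  intro x y hxy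
  refine Subtype.ext (Subtype.ext (funext fun k => ?_))
  refine eq_of_pow_eq_pow_of_coprime (coprime_prod_Ico hcop k) ?_
    (gammaSubgroup.apply_pow_prod_eq_one x k) (gammaSubgroup.apply_pow_prod_eq_one y k)
  exact congrArg (fun z : gammaSubgroup w n => ((z : Solenoid w) : ℕ → Circle) k) hxy

theorem gammaSubgroup.pow_surjective (hcop : ∀ m ≥ n, l.Coprime (w m)) :
    Function.Surjective (fun x : gammaSubgroup w n => x ^ l) := by
  intro y
  choose X hXl hXW using fun k => exists_pow_eq_and_pow_eq_one_of_coprime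
    (coprime_prod_Ico hcop k) (gammaSubgroup.apply_pow_prod_eq_one y k)
  have hX_of_le : ∀ k ≤ n, X k = 1 := fun k hk => by
    simpa [Finset.Ico_eq_empty_of_le hk] using hXW k
  -- `X k` and `X (k + 1) ^ w k` are both `l`-th roots of `y k` of order dividing `∏ Ico n k`.
  have hX_mem : X ∈ solenoidSubgroup w := fun k => by
    rcases lt_or_ge k n with hkn | hnk
    · rw [hX_of_le k hkn.le, hX_of_le (k + 1) hkn, one_pow]
    refine eq_of_pow_eq_pow_of_coprime (coprime_prod_Ico hcop k) ?_ (hXW k) ?_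
    · rw [← pow_mul, mul_comm, pow_mul, hXl, hXl]
      exact (y : Solenoid w).2 k
    · rw [← pow_mul, mul_comm, ← Finset.prod_Ico_succ_top hnk, hXW]
  exact ⟨⟨⟨X, hX_mem⟩, hX_of_le⟩, Subtype.ext (Subtype.ext (funext hXl))⟩

theorem gammaSubgroup.isHomeomorph_pow (hcop : ∀ m ≥ n, l.Coprime (w m)) :
    IsHomeomorph (fun x : gammaSubgroup w n => x ^ l) :=
  isHomeomorph_iff_continuous_bijective.mpr
    ⟨continuous_pow l, gammaSubgroup.pow_injective hcop, gammaSubgroup.pow_surjective hcop⟩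

end PowMap

-- The paper's `w_{n'}`, `n' > n`, is `w m`, `m ≥ n`, here.
theorem psi_conjugate_to_iterate_general
    (w : ℕ → ℕ) (hw : ∀ n, 1 < w n) (n : ℕ)
    (l : ℕ) (hcop : ∀ m ≥ n, Nat.Coprime l (w m)) :
    IsHomeomorph (fun x : ↥(gammaSubgroup w n) => x ^ l) ∧
    (fun x : ↥(gammaSubgroup w n) => x ^ l) ∘ solenoidPsi w hw n =
      (solenoidPsi w hw n)^[l] ∘ (fun x : ↥(gammaSubgroup w n) => x ^ l) :=
  ⟨gammaSubgroup.isHomeomorph_pow hcop, pow_comp_mul_left _ l⟩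

/-- If `l` is a positive integer relatively prime to `wₙ'` for all `n' > n`
(in our indexing, coprime to `w m` for all `m ≥ n`), then the translation
`ψₙ : Γₙ → Γₙ` is topologically conjugate to its `l`-th iterate `ψₙ^l`: the
`l`-th power map `θ(x) = x^l` is a homeomorphism with `θ ∘ ψₙ = ψₙ^l ∘ θ`. -/
theorem psi_conjugate_to_iterate
    (w : ℕ → ℕ) (hw : ∀ n, 1 < w n) (n : ℕ)
    (l : ℕ) (hl : 0 < l) (hcop : ∀ m ≥ n, Nat.Coprime l (w m)) :
    IsHomeomorph (fun x : ↥(gammaSubgroup w n) => x ^ l) ∧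
    (fun x : ↥(gammaSubgroup w n) => x ^ l) ∘ solenoidPsi w hw n =
      (solenoidPsi w hw n)^[l] ∘ (fun x : ↥(gammaSubgroup w n) => x ^ l) :=
  psi_conjugate_to_iterate_general w hw n l hcop
end

section
/- For each n ≥ 0, the projection pₙ : Θ → S¹ onto the n-th coordinate is a locally trivial fiber bundle with fiber Γₙ: pₙ is surjective, and every point z ∈ S¹ has an open neighborhood U together with a homeomorphism h : pₙ⁻¹(U) → U × Γₙ such that the first coordinate of h(x) equals pₙ(x) for all x ∈ pₙ⁻¹(U). -/
open Topology

namespace SolAux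

lemma circle_exp_pow (a : ℝ) (m : ℕ) : (Circle.exp a) ^ m = Circle.exp (m * a) := by
  induction m with
  | zero => simp
  | succ k ih => rw [pow_succ, ih, ← Circle.exp_add]; push_cast; ring_nf

variable (w : ℕ → ℕ)

/-- scaling factors -/
noncomputable def tt (n k : ℕ) : ℝ :=
  (∏ j ∈ Finset.Ico k n, (w j : ℝ)) * (∏ j ∈ Finset.Ico n k, (w j : ℝ))⁻¹

lemma tt_self (n : ℕ) : tt w n n = 1 := by simp [tt]

lemma tt_coe (n k : ℕ) (h : k ≤ n) :
    tt w n k = ((∏ j ∈ Finset.Ico k n, w j : ℕ) : ℝ) := by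
  have he : Finset.Ico n k = ∅ := Finset.Ico_eq_empty (Nat.not_lt.mpr h)
  rw [tt, he]
  push_cast
  simp

lemma tt_rec (hw : ∀ n, 1 < w n) (n k : ℕ) : tt w n k = w k * tt w n (k + 1) := by
  rcases lt_or_ge k n with h | h
  · rw [tt_coe w n k h.le, tt_coe w n (k + 1) h,
      Finset.prod_eq_prod_Ico_succ_bot h]
    push_cast; ring
  · have hk : (w k : ℝ) ≠ 0 := Nat.cast_ne_zero.mpr (Nat.lt_of_lt_of_le Nat.zero_lt_one (hw k).le).ne'
    have he1 : Finset.Ico k n = ∅ := Finset.Ico_eq_empty (Nat.not_lt.mpr h)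
    have he2 : Finset.Ico (k + 1) n = ∅ := Finset.Ico_eq_empty (by omega)
    rw [tt, tt, he1, he2, Finset.prod_Ico_succ_top h, Finset.prod_empty,
      one_mul, one_mul, mul_inv, ← mul_assoc, mul_comm ((w k : ℝ)), mul_assoc,
      mul_inv_cancel₀ hk, mul_one]

/-- the section of the projection given by a real lift of the base point -/
noncomputable def sec (hw : ∀ n, 1 < w n) (n : ℕ) (a : ℝ) : Solenoid w :=
  ⟨fun k => Circle.exp (a * tt w n k), by
    intro k
    show Circle.exp (a * tt w n k) = (Circle.exp (a * tt w n (k + 1))) ^ w k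
    rw [circle_exp_pow, tt_rec w hw n k]
    ring_nf⟩

variable (hw : ∀ n, 1 < w n)

lemma sec_apply (n : ℕ) (a : ℝ) (k : ℕ) :
    ((sec w hw n a : Solenoid w) : ℕ → Circle) k = Circle.exp (a * tt w n k) := rfl

lemma sec_continuous (n : ℕ) : Continuous (sec w hw n) := by
  apply Continuous.subtype_mk
  exact continuous_pi fun k => Circle.exp.continuous.comp (continuous_id.mul continuous_const)

lemma sec_coord (n : ℕ) (a : ℝ) (k : ℕ) (hk : k ≤ n) :
    ((sec w hw n a : Solenoid w) : ℕ → Circle) k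
      = (Circle.exp a) ^ (∏ j ∈ Finset.Ico k n, w j) := by
  rw [sec_apply, tt_coe w n k hk, circle_exp_pow, mul_comm]

lemma coord_pow (x : Solenoid w) (k n : ℕ) (h : k ≤ n) :
    (x : ℕ → Circle) k = (x : ℕ → Circle) n ^ (∏ j ∈ Finset.Ico k n, w j) := by
  induction n, h using Nat.le_induction with
  | base => simp
  | succ m hkm ih =>
    have hx : (x : ℕ → Circle) m = (x : ℕ → Circle) (m + 1) ^ w m := x.2 m
    rw [ih, hx, ← pow_mul, mul_comm (w m), Finset.prod_Ico_succ_top hkm]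

variable (z : Circle)

def UU : Set Circle := {u | ((u * z⁻¹ : Circle) : ℂ) ≠ -1}

lemma UU_open : IsOpen (UU z) := by
  have : Continuous fun u : Circle => ((u * z⁻¹ : Circle) : ℂ) :=
    continuous_subtype_val.comp (continuous_id.mul continuous_const)
  exact isOpen_compl_singleton.preimage this

lemma mem_UU : z ∈ UU z := by
  show ((z * z⁻¹ : Circle) : ℂ) ≠ -1
  rw [mul_inv_cancel]
  norm_num

noncomputable def alpha (u : Circle) : ℝ :=
  Complex.arg ((u * z⁻¹ : Circle) : ℂ) + Complex.arg (z : ℂ)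

lemma exp_alpha (u : Circle) : Circle.exp (alpha z u) = u := by
  rw [alpha, Circle.exp_add, Circle.exp_arg, Circle.exp_arg, inv_mul_cancel_right]

lemma alpha_contOn : ContinuousOn (alpha z) (UU z) := by
  apply ContinuousOn.add _ continuousOn_const
  intro u hu
  apply ContinuousAt.continuousWithinAt
  have hc : Continuous fun v : Circle => ((v * z⁻¹ : Circle) : ℂ) :=
    continuous_subtype_val.comp (continuous_id.mul continuous_const)
  apply (Complex.continuousAt_arg ?_).comp hc.continuousAt
  rcases lt_or_ge 0 ((u * z⁻¹ : Circle) : ℂ).re with h' | h'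
  · exact Or.inl h'
  · right
    intro him
    apply hu
    have habs := Circle.norm_coe (u * z⁻¹)
    rw [Complex.norm_def, Complex.normSq_apply, him, mul_zero, add_zero,
      Real.sqrt_mul_self_eq_abs, abs_of_nonpos h'] at habs
    apply Complex.ext
    · rw [Complex.neg_re, Complex.one_re]; linarith
    · rw [Complex.neg_im, Complex.one_im, him, neg_zero]

lemma mem_gamma (n : ℕ) (x : Solenoid w) :
    (sec w hw n (alpha z ((x : ℕ → Circle) n)))⁻¹ * x ∈ gammaSubgroup w n := by
  intro k hk
  simp only [Subgroup.coe_mul, Subgroup.coe_inv, Pi.mul_apply, Pi.inv_apply]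
  rw [sec_coord w hw n _ k hk, exp_alpha, coord_pow w x k n hk, inv_mul_cancel]

noncomputable def trivHomeo (n : ℕ) :
    ↥((fun x : Solenoid w => (x : ℕ → Circle) n) ⁻¹' UU z) ≃ₜ
      ↥(UU z) × ↥(gammaSubgroup w n) where
  toFun x := (⟨((x : Solenoid w) : ℕ → Circle) n, x.2⟩,
    ⟨(sec w hw n (alpha z (((x : Solenoid w) : ℕ → Circle) n)))⁻¹ * (x : Solenoid w),
      mem_gamma w hw z n _⟩)
  invFun ug := ⟨sec w hw n (alpha z (ug.1 : Circle)) * (ug.2 : Solenoid w), by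
    show ((sec w hw n (alpha z (ug.1 : Circle)) * (ug.2 : Solenoid w)
        : Solenoid w) : ℕ → Circle) n ∈ UU z
    have h2 : ((ug.2 : Solenoid w) : ℕ → Circle) n = 1 := ug.2.2 n le_rfl
    simp only [Subgroup.coe_mul, Pi.mul_apply, h2, mul_one, sec_apply, tt_self, mul_one,
      exp_alpha]
    exact ug.1.2⟩
  left_inv x := by
    apply Subtype.ext
    show sec w hw n (alpha z _) * ((sec w hw n (alpha z _))⁻¹ * (x : Solenoid w))
        = (x : Solenoid w)
    exact mul_inv_cancel_left _ _
  right_inv ug := by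
    have key : ((sec w hw n (alpha z (ug.1 : Circle)) * (ug.2 : Solenoid w)
        : Solenoid w) : ℕ → Circle) n = (ug.1 : Circle) := by
      have h2 : ((ug.2 : Solenoid w) : ℕ → Circle) n = 1 := ug.2.2 n le_rfl
      simp only [Subgroup.coe_mul, Pi.mul_apply, h2, mul_one, sec_apply, tt_self, mul_one,
        exp_alpha]
    refine Prod.ext (Subtype.ext key) (Subtype.ext ?_)
    show (sec w hw n (alpha z _))⁻¹ *
        (sec w hw n (alpha z (ug.1 : Circle)) * (ug.2 : Solenoid w)) = (ug.2 : Solenoid w)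
    rw [key, inv_mul_cancel_left]
  continuous_toFun := by
    have c1 : Continuous fun x : ↥((fun x : Solenoid w => (x : ℕ → Circle) n) ⁻¹' UU z) =>
        ((x : Solenoid w) : ℕ → Circle) n :=
      (continuous_apply n).comp (continuous_subtype_val.comp continuous_subtype_val)
    have cq : Continuous fun x : ↥((fun x : Solenoid w => (x : ℕ → Circle) n) ⁻¹' UU z) =>
        (⟨((x : Solenoid w) : ℕ → Circle) n, x.2⟩ : ↥(UU z)) := c1.subtype_mk _
    have ca : Continuous fun x : ↥((fun x : Solenoid w => (x : ℕ → Circle) n) ⁻¹' UU z) =>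
        alpha z (((x : Solenoid w) : ℕ → Circle) n) :=
      ((alpha_contOn z).restrict).comp cq
    exact cq.prodMk ((((sec_continuous w hw n).comp ca).inv.mul
      (continuous_subtype_val)).subtype_mk _)
  continuous_invFun := by
    have ca : Continuous fun ug : ↥(UU z) × ↥(gammaSubgroup w n) =>
        alpha z (ug.1 : Circle) :=
      ((alpha_contOn z).restrict).comp continuous_fst
    exact (((sec_continuous w hw n).comp ca).mul
      (continuous_subtype_val.comp continuous_snd)).subtype_mk _

end SolAux

/-- **The projection `pₙ : Θ → S¹` onto the `n`-th coordinate is a locally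
trivial fiber bundle with fiber `Γₙ`:** it is surjective, and every point of
`S¹` has an open neighborhood `U` with a homeomorphism
`pₙ⁻¹(U) ≃ₜ U × Γₙ` whose first coordinate is `pₙ`. -/
theorem solenoid_projection_fiber_bundle
    (w : ℕ → ℕ) (hw : ∀ n, 1 < w n) (n : ℕ) :
    Function.Surjective (fun x : Solenoid w => (x : ℕ → Circle) n) ∧
    ∀ z : Circle, ∃ U : Set Circle, IsOpen U ∧ z ∈ U ∧
      ∃ h : ↥((fun x : Solenoid w => (x : ℕ → Circle) n) ⁻¹' U) ≃ₜ
              ↥U × ↥(gammaSubgroup w n),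
        ∀ x : ↥((fun x : Solenoid w => (x : ℕ → Circle) n) ⁻¹' U),
          ((h x).1 : Circle) = ((x : Solenoid w) : ℕ → Circle) n := by
  constructor
  · intro z
    refine ⟨SolAux.sec w hw n (Complex.arg (z : ℂ)), ?_⟩
    show ((SolAux.sec w hw n (Complex.arg (z : ℂ)) : Solenoid w) : ℕ → Circle) n = z
    rw [SolAux.sec_apply, SolAux.tt_self, mul_one, Circle.exp_arg]
  · intro z
    exact ⟨SolAux.UU z, SolAux.UU_open z, SolAux.mem_UU z,
      SolAux.trivHomeo w hw z n, fun x => rfl⟩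
end
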